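/- arXiv:0904.0555 — 3 statements merged into one kernel-verified Lean document; each statement's English description precedes it below -/
import Mathlib

section
/- For the CIR model with λ ≠ 0, the functions φ_t(u) = −(λθ)/(2η²) · log(1 − 2η² b(t) u) and ψ_t(u) = a(t)u / (1 − 2η² b(t) u), where a(t) = e^{−λt} and b(t) = (1 − e^{−λt})/λ, satisfy the generalized Riccati equations ∂_t φ_t(u) = F(ψ_t(u)) and ∂_t ψ_t(u) = R(ψ_t(u)), where F(u) = λθu and R(u) = 2η²u² − λu, with initial conditions φ_0(u) = 0 and ψ_0(u) = u, for all t ≥ 0 and u < 1/(2η² b(t)). -/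
noncomputable def aCIR (lam t : ℝ) : ℝ := Real.exp (-lam * t)
noncomputable def bCIR (lam t : ℝ) : ℝ := (1 - Real.exp (-lam * t)) / lam
noncomputable def phiCIR (lam th eta t u : ℝ) : ℝ :=
  -(lam * th) / (2 * eta ^ 2) * Real.log (1 - 2 * eta ^ 2 * bCIR lam t * u)
noncomputable def psiCIR (lam eta t u : ℝ) : ℝ :=
  aCIR lam t * u / (1 - 2 * eta ^ 2 * bCIR lam t * u)

/-! Since `a' = -λ a` and `b' = a`, the denominator `D = 1 - 2η² b u` has `D' = -2η² a u`.
Hence `φ' = (λθ / 2η²) · 2η² a u / D = λθ ψ`, and the quotient rule gives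
`ψ' = (-λ a u D + a u · 2η² a u) / D² = -λ ψ + 2η² ψ²`. -/

theorem aCIR_zero (lam : ℝ) : aCIR lam 0 = 1 := by
  simp [aCIR]

theorem bCIR_zero (lam : ℝ) : bCIR lam 0 = 0 := by
  simp [bCIR]

theorem hasDerivAt_aCIR (lam t : ℝ) : HasDerivAt (aCIR lam) (-lam * aCIR lam t) t := by
  have h := ((hasDerivAt_id t).const_mul (-lam)).exp
  rwa [mul_one, mul_comm] at h

theorem hasDerivAt_bCIR {lam : ℝ} (hlam : lam ≠ 0) (t : ℝ) :
    HasDerivAt (bCIR lam) (aCIR lam t) t := by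
  have h := ((hasDerivAt_aCIR lam t).const_sub 1).div_const lam
  rwa [neg_mul, neg_neg, mul_div_cancel_left₀ _ hlam] at h

theorem hasDerivAt_denom_CIR {lam : ℝ} (hlam : lam ≠ 0) (eta t u : ℝ) :
    HasDerivAt (fun s => 1 - 2 * eta ^ 2 * bCIR lam s * u)
      (-(2 * eta ^ 2 * aCIR lam t * u)) t := by
  have h := (((hasDerivAt_bCIR hlam t).const_mul (2 * eta ^ 2)).mul_const u).const_sub 1
  convert h using 1

theorem phiCIR_zero (lam th eta u : ℝ) : phiCIR lam th eta 0 u = 0 := by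
  simp [phiCIR, bCIR_zero]

theorem psiCIR_zero (lam eta u : ℝ) : psiCIR lam eta 0 u = u := by
  simp [psiCIR, aCIR_zero, bCIR_zero]

theorem hasDerivAt_phiCIR {lam eta : ℝ} (hlam : lam ≠ 0) (heta : eta ≠ 0) (th : ℝ) {t u : ℝ}
    (hD : 1 - 2 * eta ^ 2 * bCIR lam t * u ≠ 0) :
    HasDerivAt (fun s => phiCIR lam th eta s u) (lam * th * psiCIR lam eta t u) t := by
  have h := ((hasDerivAt_denom_CIR hlam eta t u).log hD).const_mul (-(lam * th) / (2 * eta ^ 2))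
  refine (h : HasDerivAt (fun s => phiCIR lam th eta s u) _ t).congr_deriv ?_
  simp only [psiCIR]
  field_simp

theorem hasDerivAt_psiCIR {lam : ℝ} (hlam : lam ≠ 0) (eta : ℝ) {t u : ℝ}
    (hD : 1 - 2 * eta ^ 2 * bCIR lam t * u ≠ 0) :
    HasDerivAt (fun s => psiCIR lam eta s u)
      (2 * eta ^ 2 * (psiCIR lam eta t u) ^ 2 - lam * psiCIR lam eta t u) t := by
  have h := ((hasDerivAt_aCIR lam t).mul_const u).div (hasDerivAt_denom_CIR hlam eta t u) hD
  refine (h : HasDerivAt (fun s => psiCIR lam eta s u) _ t).congr_deriv ?_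
  simp only [psiCIR]
  field_simp
  ring

theorem cir_riccati_general (lam th eta : ℝ) (hlam : 0 < lam) (heta : 0 < eta) :
    (∀ u : ℝ, phiCIR lam th eta 0 u = 0 ∧ psiCIR lam eta 0 u = u) ∧
    (∀ t u : ℝ, 0 ≤ t → 2 * eta ^ 2 * bCIR lam t * u < 1 →
      HasDerivAt (fun s => phiCIR lam th eta s u)
        (lam * th * psiCIR lam eta t u) t ∧
      HasDerivAt (fun s => psiCIR lam eta s u)
        (2 * eta ^ 2 * (psiCIR lam eta t u) ^ 2 - lam * psiCIR lam eta t u) t) := by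
  refine ⟨fun u => ⟨phiCIR_zero lam th eta u, psiCIR_zero lam eta u⟩, fun t u _ hu => ?_⟩
  have hD : 1 - 2 * eta ^ 2 * bCIR lam t * u ≠ 0 := (sub_pos.mpr hu).ne'
  exact ⟨hasDerivAt_phiCIR hlam.ne' heta.ne' th hD, hasDerivAt_psiCIR hlam.ne' eta hD⟩

theorem cir_riccati (lam th eta : ℝ) (hlam : 0 < lam) (hth : 0 < th) (heta : 0 < eta) :
    (∀ u : ℝ, phiCIR lam th eta 0 u = 0 ∧ psiCIR lam eta 0 u = u) ∧
    (∀ t u : ℝ, 0 ≤ t → 2 * eta ^ 2 * bCIR lam t * u < 1 →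
      HasDerivAt (fun s => phiCIR lam th eta s u)
        (lam * th * psiCIR lam eta t u) t ∧
      HasDerivAt (fun s => psiCIR lam eta s u)
        (2 * eta ^ 2 * (psiCIR lam eta t u) ^ 2 - lam * psiCIR lam eta t u) t) :=
  cir_riccati_general lam th eta hlam heta
end

section
/- Let Y ∈ ℝ, c_k > 0, A_k ∈ ℝ, B_k < 0 for k = i+1,…,m, and z ∈ ℂ with Im(z) > 0. Suppose 1 − Σ_k c_k e^{A_k + B_k Y} = 0. Then ∫_{−∞}^{∞} e^{izx} (1 − Σ_k c_k e^{A_k + B_k x})⁺ dx = e^{izY} ( Σ_k c_k e^{A_k + B_k Y}/(B_k + iz) − 1/(iz) ), where the integrand is supported on [Y, ∞) because the map x ↦ 1 − Σ_k c_k e^{A_k + B_k x} is strictly increasing with zero at Y. -/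
/-!
Since `c k > 0` and `B k < 0`, the map `x ↦ 1 - ∑ c k * exp (A k + B k * x)` is monotone and
vanishes at `Y`, so its positive part is zero on `(-∞, Y]` and the map itself on `(Y, ∞)`. There
the integrand is a finite combination of `exp (i z x)` and `exp ((B k + i z) x)`, whose exponents
have negative real part because `0 < z.im`; each integrates over `(Y, ∞)` to `-exp (w Y) / w`.
-/

open Complex MeasureTheory Set

lemma cexp_mul_ofReal_mul_exp_affine (w : ℂ) (c a b x : ℝ) :
    cexp (w * x) * (c * Real.exp (a + b * x) : ℝ) = (c * Real.exp a : ℝ) * cexp ((b + w) * x) := by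
  push_cast
  rw [Complex.exp_add, add_mul, Complex.exp_add]
  ring

lemma integrableOn_cexp_mul_ofReal_mul_exp_affine_Ioi {w : ℂ} {b : ℝ} (hbw : b + w.re < 0)
    (c a Y : ℝ) :
    IntegrableOn (fun x : ℝ => cexp (w * x) * (c * Real.exp (a + b * x) : ℝ)) (Ioi Y) := by
  simp_rw [cexp_mul_ofReal_mul_exp_affine]
  exact (integrableOn_exp_mul_complex_Ioi (a := b + w) (by simpa using hbw) Y).const_mul _

lemma integral_cexp_mul_ofReal_mul_exp_affine_Ioi {w : ℂ} {b : ℝ} (hbw : b + w.re < 0)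
    (c a Y : ℝ) :
    ∫ x in Ioi Y, cexp (w * x) * (c * Real.exp (a + b * x) : ℝ) =
      -cexp (w * Y) * (c * Real.exp (a + b * Y) : ℝ) / (b + w) := by
  simp_rw [cexp_mul_ofReal_mul_exp_affine, integral_const_mul,
    integral_exp_mul_complex_Ioi (a := b + w) (by simpa using hbw)]
  rw [neg_mul, cexp_mul_ofReal_mul_exp_affine]
  ring

lemma integral_mul_max_zero_eq_setIntegral_Ioi {f : ℝ → ℂ} {g : ℝ → ℝ} (hg : Monotone g)
    {Y : ℝ} (hY : g Y = 0) :
    ∫ x, f x * (max (g x) 0 : ℝ) = ∫ x in Ioi Y, f x * g x := by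
  rw [← setIntegral_eq_integral_of_forall_compl_eq_zero (s := Ioi Y)]
  · refine setIntegral_congr_fun measurableSet_Ioi fun x hx => ?_
    rw [max_eq_left (hY ▸ hg hx.le)]
  · intro x hx
    rw [max_eq_right (hY ▸ hg (not_lt.mp hx)), ofReal_zero, mul_zero]

section

variable {ι : Type*} (s : Finset ι) (c A B : ι → ℝ)

lemma monotone_one_sub_sum_mul_exp_affine (hc : ∀ k ∈ s, 0 ≤ c k) (hB : ∀ k ∈ s, B k ≤ 0) :
    Monotone fun x : ℝ => 1 - ∑ k ∈ s, c k * Real.exp (A k + B k * x) :=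
  fun _ _ hxy => sub_le_sub_left (Finset.sum_le_sum fun k hk =>
    mul_le_mul_of_nonneg_left (Real.exp_le_exp.2 (by nlinarith [hB k hk])) (hc k hk)) 1

lemma integral_cexp_mul_one_sub_sum_mul_exp_affine_Ioi {w : ℂ} (hw : w.re < 0)
    (hBw : ∀ k ∈ s, B k + w.re < 0) (Y : ℝ) :
    ∫ x in Ioi Y, cexp (w * x) * ((1 - ∑ k ∈ s, c k * Real.exp (A k + B k * x) : ℝ) : ℂ) =
      cexp (w * Y) * (∑ k ∈ s, (c k * Real.exp (A k + B k * Y) : ℝ) / ((B k : ℂ) + w) - 1 / w) := by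
  have hint : ∀ k ∈ s, IntegrableOn
      (fun x : ℝ => cexp (w * x) * (c k * Real.exp (A k + B k * x) : ℝ)) (Ioi Y) :=
    fun k hk => integrableOn_cexp_mul_ofReal_mul_exp_affine_Ioi (hBw k hk) _ _ Y
  simp_rw [ofReal_sub, ofReal_one, ofReal_sum, mul_sub, mul_one, Finset.mul_sum]
  rw [integral_sub (integrableOn_exp_mul_complex_Ioi hw Y) (integrable_finsetSum _ hint),
    integral_finsetSum _ hint, integral_exp_mul_complex_Ioi hw,
    Finset.sum_congr rfl fun k hk => integral_cexp_mul_ofReal_mul_exp_affine_Ioi (hBw k hk) _ _ Y]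
  simp only [neg_mul, neg_div, Finset.sum_neg_distrib, mul_div_assoc]
  ring

end

theorem swaption_fourier_transform_general (i m : ℕ)
    (c A B : ℕ → ℝ) (Y : ℝ) (z : ℂ) (hz : 0 < z.im)
    (hc : ∀ k ∈ Finset.Icc (i + 1) m, 0 < c k)
    (hB : ∀ k ∈ Finset.Icc (i + 1) m, B k < 0)
    (hY : 1 - ∑ k ∈ Finset.Icc (i + 1) m, c k * Real.exp (A k + B k * Y) = 0) :
    (∫ x : ℝ, Complex.exp (Complex.I * z * x) *
        (max (1 - ∑ k ∈ Finset.Icc (i + 1) m, c k * Real.exp (A k + B k * x)) 0 : ℝ)) =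
      Complex.exp (Complex.I * z * Y) *
        ((∑ k ∈ Finset.Icc (i + 1) m,
            (c k * Real.exp (A k + B k * Y) : ℝ) / ((B k : ℂ) + Complex.I * z))
          - 1 / (Complex.I * z)) := by
  have hIz : (I * z).re = -z.im := by simp
  have hmono := monotone_one_sub_sum_mul_exp_affine _ c A B (fun k hk => (hc k hk).le)
    (fun k hk => (hB k hk).le)
  rw [integral_mul_max_zero_eq_setIntegral_Ioi hmono hY,
    integral_cexp_mul_one_sub_sum_mul_exp_affine_Ioi _ c A B (by linarith)
      (fun k hk => by linarith [hB k hk]) Y]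

theorem swaption_fourier_transform (i m : ℕ) (him : i < m)
    (c A B : ℕ → ℝ) (Y : ℝ) (z : ℂ) (hz : 0 < z.im)
    (hc : ∀ k ∈ Finset.Icc (i + 1) m, 0 < c k)
    (hB : ∀ k ∈ Finset.Icc (i + 1) m, B k < 0)
    (hY : 1 - ∑ k ∈ Finset.Icc (i + 1) m, c k * Real.exp (A k + B k * Y) = 0) :
    (∫ x : ℝ, Complex.exp (Complex.I * z * x) *
        (max (1 - ∑ k ∈ Finset.Icc (i + 1) m, c k * Real.exp (A k + B k * x)) 0 : ℝ)) =
      Complex.exp (Complex.I * z * Y) *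
        ((∑ k ∈ Finset.Icc (i + 1) m,
            (c k * Real.exp (A k + B k * Y) : ℝ) / ((B k : ℂ) + Complex.I * z))
          - 1 / (Complex.I * z)) :=
  swaption_fourier_transform_general i m c A B Y z hz hc hB hY
end

section
/- Suppose the conditional affine property holds: E_x[exp⟨u, X_{t+s}⟩ | ℱ_s] = exp(φ_t(u) + ⟨ψ_t(u), X_s⟩) a.s. for all admissible t, s, u, and M^{u_k}_t := exp(φ_{T−t}(u_k) + ⟨ψ_{T−t}(u_k), X_t⟩) with M^{u_k}_s > 0. Then for 0 ≤ s ≤ r ≤ T and v with ψ_{T−r}(u_k) + v admissible, E_x[(M^{u_k}_r / M^{u_k}_s) · exp⟨v, X_r⟩ | ℱ_s] = exp( φ_{r−s}(ψ_{T−r}(u_k)+v) − φ_{r−s}(ψ_{T−r}(u_k)) + ⟨ψ_{r−s}(ψ_{T−r}(u_k)+v) − ψ_{r−s}(ψ_{T−r}(u_k)), X_s⟩ ), assuming additionally the semi-flow property φ_{t+s}(u) = φ_t(u) + φ_s(ψ_t(u)) and ψ_{t+s}(u) = ψ_s(ψ_t(u)). -/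
/-!
With `p = ψ_{T-r}(u_k)`, the semi-flow identities turn `M_r / M_s` into
`exp ⟨p, X_r⟩ / exp (φ_{r-s}(p) + ⟨ψ_{r-s}(p), X_s⟩)`, and by the affine property the
denominator is `E[exp ⟨p, X_r⟩ | ℱ_s]`, hence (a version of) an `ℱ_s`-measurable function.
Pulling it out of the conditional expectation leaves `E[exp ⟨p + v, X_r⟩ | ℱ_s]`, which the
affine property evaluates once more. The product is integrable by Cauchy–Schwarz, since every
exponential moment of `X` is finite (a conditional expectation equal to an exponential cannot be
the junk value `0`).
-/

open MeasureTheory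

section ExponentialMoments

variable {Ω ι : Type*} [Fintype ι] {m m0 : MeasurableSpace Ω} {μ : Measure Ω}

lemma integrable_of_condExp_ae_eq_exp {f g : Ω → ℝ}
    (h : μ[f|m] =ᵐ[μ] fun ω => Real.exp (g ω)) : Integrable f μ := by
  rcases eq_zero_or_neZero μ with rfl | _
  · exact integrable_zero_measure
  by_contra hf
  rw [condExp_of_not_integrable hf] at h
  obtain ⟨ω, hω⟩ := h.exists
  exact (Real.exp_pos (g ω)).ne' hω.symm

lemma aestronglyMeasurable_of_condExp_ae_eq {f g : Ω → ℝ} (h : μ[f|m] =ᵐ[μ] g) :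
    AEStronglyMeasurable[m] g μ :=
  ⟨μ[f|m], stronglyMeasurable_condExp, h.symm⟩

lemma memLp_two_exp_dotProduct {Y : Ω → ι → ℝ}
    (hY : ∀ u, Integrable (fun ω => Real.exp (u ⬝ᵥ Y ω)) μ) (u : ι → ℝ) :
    MemLp (fun ω => Real.exp (u ⬝ᵥ Y ω)) 2 μ := by
  refine (memLp_two_iff_integrable_sq (hY u).aestronglyMeasurable).2 ?_
  refine (hY ((2 : ℝ) • u)).congr (ae_of_all _ fun ω => ?_)
  dsimp only
  rw [smul_dotProduct, smul_eq_mul, two_mul, Real.exp_add, sq]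

lemma integrable_exp_dotProduct_mul_exp_dotProduct {Y Z : Ω → ι → ℝ}
    (hY : ∀ u, Integrable (fun ω => Real.exp (u ⬝ᵥ Y ω)) μ)
    (hZ : ∀ u, Integrable (fun ω => Real.exp (u ⬝ᵥ Z ω)) μ) (u w : ι → ℝ) :
    Integrable (fun ω => Real.exp (u ⬝ᵥ Y ω) * Real.exp (w ⬝ᵥ Z ω)) μ :=
  (memLp_two_exp_dotProduct hY u).integrable_mul (memLp_two_exp_dotProduct hZ w)

end ExponentialMoments

section AffineProcess

variable {Ω ι : Type*} [Fintype ι] {m : MeasurableSpace Ω}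

def IsConditionallyAffine (μ : Measure Ω) (F : ℝ → MeasurableSpace Ω) (X : ℝ → Ω → ι → ℝ)
    (phi : ℝ → (ι → ℝ) → ℝ) (psi : ℝ → (ι → ℝ) → ι → ℝ) (T : ℝ) : Prop :=
  ∀ t s : ℝ, 0 ≤ t → 0 ≤ s → t + s ≤ T → ∀ u : ι → ℝ,
    μ[fun ω => Real.exp (u ⬝ᵥ X (t + s) ω)|F s] =ᵐ[μ]
      fun ω => Real.exp (phi t u + psi t u ⬝ᵥ X s ω)

variable {μ : Measure Ω} {F : ℝ → MeasurableSpace Ω} {X : ℝ → Ω → ι → ℝ}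
  {phi : ℝ → (ι → ℝ) → ℝ} {psi : ℝ → (ι → ℝ) → ι → ℝ} {T s r : ℝ}

lemma IsConditionallyAffine.condExp_exp (h : IsConditionallyAffine μ F X phi psi T)
    (hs : 0 ≤ s) (hsr : s ≤ r) (hrT : r ≤ T) (u : ι → ℝ) :
    μ[fun ω => Real.exp (u ⬝ᵥ X r ω)|F s] =ᵐ[μ]
      fun ω => Real.exp (phi (r - s) u + psi (r - s) u ⬝ᵥ X s ω) := by
  simpa only [sub_add_cancel] using h (r - s) s (sub_nonneg.2 hsr) hs (by linarith) u

lemma IsConditionallyAffine.integrable_exp (h : IsConditionallyAffine μ F X phi psi T)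
    (hr : 0 ≤ r) (hrT : r ≤ T) (u : ι → ℝ) :
    Integrable (fun ω => Real.exp (u ⬝ᵥ X r ω)) μ :=
  integrable_of_condExp_ae_eq_exp (h.condExp_exp hr le_rfl hrT u)

lemma IsConditionallyAffine.condExp_inv_exp_mul_exp (h : IsConditionallyAffine μ F X phi psi T)
    (hs : 0 ≤ s) (hsr : s ≤ r) (hrT : r ≤ T) (u w : ι → ℝ) :
    μ[fun ω => (Real.exp (phi (r - s) u + psi (r - s) u ⬝ᵥ X s ω))⁻¹ *
        Real.exp (w ⬝ᵥ X r ω)|F s] =ᵐ[μ]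
      fun ω => Real.exp
        (phi (r - s) w - phi (r - s) u + (psi (r - s) w - psi (r - s) u) ⬝ᵥ X s ω) := by
  set G : Ω → ℝ := fun ω => (Real.exp (phi (r - s) u + psi (r - s) u ⬝ᵥ X s ω))⁻¹
  -- `X s` need not be `F s`-measurable; `G` is, up to a null set, as the inverse of
  -- the conditional expectation of `exp (u ⬝ᵥ X r)`.
  have hG : AEStronglyMeasurable[F s] G μ :=
    (aestronglyMeasurable_of_condExp_ae_eq (h.condExp_exp hs hsr hrT u)).inv₀
  have hw := h.integrable_exp (hs.trans hsr) hrT w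
  have hGw : Integrable (G * fun ω => Real.exp (w ⬝ᵥ X r ω)) μ := by
    refine ((integrable_exp_dotProduct_mul_exp_dotProduct (h.integrable_exp hs (by linarith))
      (h.integrable_exp (hs.trans hsr) hrT) (-psi (r - s) u) w).const_mul
        (Real.exp (-phi (r - s) u))).congr (ae_of_all _ fun ω => ?_)
    simp only [G, Pi.mul_apply, neg_dotProduct, Real.exp_neg, ← mul_assoc, ← mul_inv,
      ← Real.exp_add]
  change μ[G * fun ω => Real.exp (w ⬝ᵥ X r ω)|F s] =ᵐ[μ] _
  filter_upwards [condExp_mul_of_aestronglyMeasurable_left hG hGw hw,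
    h.condExp_exp hs hsr hrT w] with ω hpull hcond
  rw [hpull, Pi.mul_apply, hcond]
  dsimp only [G]
  rw [← Real.exp_neg, ← Real.exp_add, sub_dotProduct]
  congr 1
  ring

lemma exp_affine_div_exp_affine_mul_exp_of_semiflow
    (hflowphi : ∀ t s : ℝ, 0 ≤ t → 0 ≤ s → ∀ u, phi (t + s) u = phi t u + phi s (psi t u))
    (hflowpsi : ∀ t s : ℝ, 0 ≤ t → 0 ≤ s → ∀ u, psi (t + s) u = psi s (psi t u))
    (hsr : s ≤ r) (hrT : r ≤ T) (u v x y : ι → ℝ) :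
    Real.exp (phi (T - r) u + psi (T - r) u ⬝ᵥ y) /
        Real.exp (phi (T - s) u + psi (T - s) u ⬝ᵥ x) * Real.exp (v ⬝ᵥ y) =
      (Real.exp (phi (r - s) (psi (T - r) u) + psi (r - s) (psi (T - r) u) ⬝ᵥ x))⁻¹ *
        Real.exp ((psi (T - r) u + v) ⬝ᵥ y) := by
  have hT : T - s = T - r + (r - s) := by ring
  rw [hT, hflowphi _ _ (by linarith) (by linarith), hflowpsi _ _ (by linarith) (by linarith)]
  simp only [add_dotProduct, Real.exp_add]
  field_simp

end AffineProcess

theorem forward_measure_affine_general {Ω : Type*} {m : MeasurableSpace Ω}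
    (μ : Measure Ω) (d : ℕ) (T : ℝ)
    (F : ℝ → MeasurableSpace Ω)
    (X : ℝ → Ω → (Fin d → ℝ))
    (phi : ℝ → (Fin d → ℝ) → ℝ) (psi : ℝ → (Fin d → ℝ) → (Fin d → ℝ))
    (haff : ∀ t s : ℝ, 0 ≤ t → 0 ≤ s → t + s ≤ T → ∀ u : Fin d → ℝ,
      (μ[fun ω => Real.exp (∑ i, u i * X (t + s) ω i)|F s]) =ᵐ[μ]
        fun ω => Real.exp (phi t u + ∑ i, psi t u i * X s ω i))
    (hflowphi : ∀ t s : ℝ, 0 ≤ t → 0 ≤ s → ∀ u, phi (t + s) u = phi t u + phi s (psi t u))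
    (hflowpsi : ∀ t s : ℝ, 0 ≤ t → 0 ≤ s → ∀ u, psi (t + s) u = psi s (psi t u))
    (uk : Fin d → ℝ)
    (M : ℝ → Ω → ℝ)
    (hM : ∀ t ω, M t ω =
      Real.exp (phi (T - t) uk + ∑ i, psi (T - t) uk i * X t ω i)) :
    ∀ s r : ℝ, 0 ≤ s → s ≤ r → r ≤ T → ∀ v : Fin d → ℝ,
      (μ[fun ω => (M r ω / M s ω) * Real.exp (∑ i, v i * X r ω i)|F s]) =ᵐ[μ]
        fun ω => Real.exp
          (phi (r - s) (psi (T - r) uk + v) - phi (r - s) (psi (T - r) uk) +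
            ∑ i, (psi (r - s) (psi (T - r) uk + v) i -
                  psi (r - s) (psi (T - r) uk) i) * X s ω i) := by
  intro s r hs hsr hrT v
  have hintegrand : (fun ω => M r ω / M s ω * Real.exp (∑ i, v i * X r ω i)) =
      fun ω => (Real.exp (phi (r - s) (psi (T - r) uk) +
        psi (r - s) (psi (T - r) uk) ⬝ᵥ X s ω))⁻¹ * Real.exp ((psi (T - r) uk + v) ⬝ᵥ X r ω) := by
    ext ω
    simp only [hM]
    exact exp_affine_div_exp_affine_mul_exp_of_semiflow hflowphi hflowpsi hsr hrT uk v _ _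
  rw [hintegrand]
  exact IsConditionallyAffine.condExp_inv_exp_mul_exp haff hs hsr hrT _ _

theorem forward_measure_affine {Ω : Type*} {m : MeasurableSpace Ω}
    (μ : Measure Ω) [IsProbabilityMeasure μ] (d : ℕ) (T : ℝ) (hT : 0 ≤ T)
    (F : ℝ → MeasurableSpace Ω) (hF : ∀ s, F s ≤ m)
    (X : ℝ → Ω → (Fin d → ℝ))
    (phi : ℝ → (Fin d → ℝ) → ℝ) (psi : ℝ → (Fin d → ℝ) → (Fin d → ℝ))
    (haff : ∀ t s : ℝ, 0 ≤ t → 0 ≤ s → t + s ≤ T → ∀ u : Fin d → ℝ,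
      (μ[fun ω => Real.exp (∑ i, u i * X (t + s) ω i)|F s]) =ᵐ[μ]
        fun ω => Real.exp (phi t u + ∑ i, psi t u i * X s ω i))
    (hflowphi : ∀ t s : ℝ, 0 ≤ t → 0 ≤ s → ∀ u, phi (t + s) u = phi t u + phi s (psi t u))
    (hflowpsi : ∀ t s : ℝ, 0 ≤ t → 0 ≤ s → ∀ u, psi (t + s) u = psi s (psi t u))
    (uk : Fin d → ℝ)
    (M : ℝ → Ω → ℝ)
    (hM : ∀ t ω, M t ω =
      Real.exp (phi (T - t) uk + ∑ i, psi (T - t) uk i * X t ω i)) :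
    ∀ s r : ℝ, 0 ≤ s → s ≤ r → r ≤ T → ∀ v : Fin d → ℝ,
      (μ[fun ω => (M r ω / M s ω) * Real.exp (∑ i, v i * X r ω i)|F s]) =ᵐ[μ]
        fun ω => Real.exp
          (phi (r - s) (psi (T - r) uk + v) - phi (r - s) (psi (T - r) uk) +
            ∑ i, (psi (r - s) (psi (T - r) uk + v) i -
                  psi (r - s) (psi (T - r) uk) i) * X s ω i) :=
  forward_measure_affine_general (m := m) μ d T F X phi psi haff hflowphi hflowpsi uk M hM
end
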